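/- Let X be a random variable with values in [0,1]^d admitting a density with respect to the Lebesgue measure on [0,1]^d, let Z be a real-valued square-integrable random variable, and let ((X_m, Z_m))_{m ≥ 1} be a sequence of independent random variables each distributed as (X, Z). For a ∈ [0,1]^d write B_a = Π_{j=1}^d [0, a(j)). Define ν_M(α, β, a) = (1/M) Σ_{m=1}^M (Z_m − α·1{X_m ∈ B_a} − β·1{X_m ∉ B_a})² and ν(α, β, a) = E[(Z − α·1{X ∈ B_a} − β·1{X ∉ B_a})²]. Then, almost surely, for every C > 0, sup_{a ∈ [0,1]^d, |α| ≤ C, |β| ≤ C} |ν_M(α, β, a) − ν(α, β, a)| → 0 as M → ∞. -/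

import Mathlib

/-!
Expanding the square, `treeLoss x z (α, β, a)` is a polynomial in `α, β` with coefficients
`z², z, 1, z·1_{B_a}(x), 1_{B_a}(x)`, so it suffices to prove a strong law for the box averages
`a ↦ (1/M) Σ_m ξ(X_m, Z_m) 1_{B_a}(X_m)` that is uniform in `a ∈ [0,1]^d`, for `ξ = z` and `ξ = 1`.
For `ξ ≥ 0` these averages are monotone in `a`, and so is their limit `a ↦ E[ξ(X, Z) 1_{B_a}(X)]`,
which is continuous because `X` has a density and hence does not charge the hyperplanes
`{x_j = a_j}`. As in Pólya's theorem on distribution functions, monotonicity and continuity upgrade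
the strong law at the countably many rational `a` to uniform convergence on compact sets; a general
`ξ` is split into its positive and negative parts.
-/

open MeasureTheory ProbabilityTheory Filter Topology Set

/-- The squared loss `(z − α·1{x ∈ B_a} − β·1{x ∉ B_a})²` of the parameters `p = (α, β, a)`,
where `B_a = Π_j [0, a(j))`. -/
noncomputable def treeLoss {d : ℕ} (x : Fin d → ℝ) (z : ℝ) (p : ℝ × ℝ × (Fin d → ℝ)) : ℝ :=
  (z - p.1 * (Set.univ.pi fun j => Set.Ico (0 : ℝ) (p.2.2 j)).indicator (fun _ => (1 : ℝ)) x
     - p.2.1 * ((Set.univ.pi fun j => Set.Ico (0 : ℝ) (p.2.2 j))ᶜ.indicator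
        (fun _ => (1 : ℝ)) x)) ^ 2

theorem TendstoUniformlyOn.tendsto_iSup_abs_sub {α ι : Type*} {F : ι → α → ℝ} {f : α → ℝ}
    {l : Filter ι} {s : Set α} (h : TendstoUniformlyOn F f l s) :
    Tendsto (fun n => ⨆ x : s, |F n x - f x|) l (𝓝 0) := by
  rw [Metric.tendsto_nhds]
  intro ε hε
  filter_upwards [Metric.tendstoUniformlyOn_iff.1 h (ε / 2) (half_pos hε)] with n hn
  have hsup : ⨆ x : s, |F n x - f x| ≤ ε / 2 := Real.iSup_le
    (fun x => by simpa only [Real.dist_eq, abs_sub_comm] using (hn x x.2).le) (half_pos hε).le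
  rw [Real.dist_eq, sub_zero, abs_of_nonneg (Real.iSup_nonneg fun _ => abs_nonneg _)]
  linarith

theorem TendstoUniformlyOn.mul_left_of_abs_le {α ι : Type*} {F : ι → α → ℝ} {f c : α → ℝ}
    {l : Filter ι} {s : Set α} {C : ℝ} (h : TendstoUniformlyOn F f l s)
    (hc : ∀ x ∈ s, |c x| ≤ C) :
    TendstoUniformlyOn (fun n x => c x * F n x) (fun x => c x * f x) l s := by
  rw [Metric.tendstoUniformlyOn_iff] at h ⊢
  intro ε hε
  have hC : 0 < |C| + 1 := by positivity
  filter_upwards [h (ε / (|C| + 1)) (div_pos hε hC)] with n hn x hx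
  rw [Real.dist_eq, ← mul_sub, abs_mul]
  calc |c x| * |f x - F n x| ≤ (|C| + 1) * |f x - F n x| := by
        gcongr
        exact (hc x hx).trans ((le_abs_self C).trans (lt_add_one _).le)
    _ < (|C| + 1) * (ε / (|C| + 1)) := by
        gcongr
        simpa only [Real.dist_eq] using hn x hx
    _ = ε := mul_div_cancel₀ _ hC.ne'

theorem exists_rat_bracket_of_continuousAt {ι : Type*} [Fintype ι] {f : (ι → ℝ) → ℝ}
    {a : ι → ℝ} (hf : ContinuousAt f a) {ε : ℝ} (hε : 0 < ε) :
    ∃ lo hi : ι → ℚ, (∀ j, (lo j : ℝ) < a j ∧ a j < hi j) ∧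
      f (fun j => hi j) - f (fun j => lo j) < ε := by
  obtain ⟨δ, hδ, hfδ⟩ := Metric.continuousAt_iff.1 hf (ε / 2) (half_pos hε)
  choose lo hlo using fun j => exists_rat_btwn (sub_lt_self (a j) hδ)
  choose hi hhi using fun j => exists_rat_btwn (lt_add_of_pos_right (a j) hδ)
  have hlo_close : dist (fun j => (lo j : ℝ)) a < δ := (dist_pi_lt_iff hδ).2 fun j => by
    rw [Real.dist_eq, abs_sub_lt_iff]; constructor <;> linarith [hlo j]
  have hhi_close : dist (fun j => (hi j : ℝ)) a < δ := (dist_pi_lt_iff hδ).2 fun j => by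
    rw [Real.dist_eq, abs_sub_lt_iff]; constructor <;> linarith [hhi j]
  refine ⟨lo, hi, fun j => ⟨(hlo j).2, (hhi j).1⟩, ?_⟩
  have h1 := hfδ hlo_close
  have h2 := hfδ hhi_close
  rw [Real.dist_eq, abs_lt] at h1 h2
  linarith [h1.1, h2.2]

theorem tendstoUniformlyOn_of_monotone_of_tendsto_rat {ι κ : Type*} [Fintype ι]
    {l : Filter κ} {F : κ → (ι → ℝ) → ℝ} {f : (ι → ℝ) → ℝ} {K : Set (ι → ℝ)}
    (hK : IsCompact K) (hF : ∀ n, Monotone (F n)) (hf : Monotone f)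
    (hfK : ∀ a ∈ K, ContinuousAt f a)
    (hlim : ∀ q : ι → ℚ, Tendsto (fun n => F n fun j => q j) l (𝓝 (f fun j => q j))) :
    TendstoUniformlyOn F f l K := by
  rw [Metric.tendstoUniformlyOn_iff]
  intro ε hε
  let Bracket := {p : (ι → ℚ) × (ι → ℚ) // f (fun j => p.2 j) - f (fun j => p.1 j) < ε / 2}
  let cell : Bracket → Set (ι → ℝ) := fun p => univ.pi fun j => Ioo (p.1.1 j : ℝ) (p.1.2 j)
  obtain ⟨t, ht⟩ := hK.elim_finite_subcover cell
    (fun p => isOpen_set_pi finite_univ fun _ _ => isOpen_Ioo) fun a ha => by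
      obtain ⟨lo, hi, hbr, hlt⟩ := exists_rat_bracket_of_continuousAt (hfK a ha) (half_pos hε)
      exact mem_iUnion.2 ⟨⟨(lo, hi), hlt⟩, fun j _ => hbr j⟩
  have hclose : ∀ q : ι → ℚ, ∀ᶠ n in l,
      |F n (fun j => q j) - f (fun j => q j)| < ε / 2 := fun q => by
    simpa only [Real.dist_eq] using Metric.tendsto_nhds.1 (hlim q) _ (half_pos hε)
  filter_upwards [(eventually_all_finset t).2 fun p _ => (hclose p.1.1).and (hclose p.1.2)]
    with n hn a ha
  obtain ⟨p, hpt, hap⟩ := mem_iUnion₂.1 (ht ha)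
  have hlo : (fun j => (p.1.1 j : ℝ)) ≤ a := fun j => (hap j (mem_univ j)).1.le
  have hhi : a ≤ fun j => (p.1.2 j : ℝ) := fun j => (hap j (mem_univ j)).2.le
  have h1 := abs_lt.1 (hn p hpt).1
  have h2 := abs_lt.1 (hn p hpt).2
  rw [Real.dist_eq, abs_lt]
  constructor <;> linarith [hF n hlo, hF n hhi, hf hlo, hf hhi, p.2]

def box {ι : Type*} (a : ι → ℝ) : Set (ι → ℝ) := univ.pi fun j => Ico 0 (a j)

section Box

variable {ι : Type*}

theorem box_mono : Monotone (box (ι := ι)) := fun _ _ hab =>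
  pi_mono fun j _ => Ico_subset_Ico le_rfl (hab j)

theorem measurableSet_box [Countable ι] (a : ι → ℝ) : MeasurableSet (box a) :=
  MeasurableSet.univ_pi fun _ => measurableSet_Ico

theorem measurable_indicator_box [Countable ι] (a : ι → ℝ) :
    Measurable ((box a).indicator (1 : (ι → ℝ) → ℝ)) :=
  measurable_const.indicator (measurableSet_box a)

theorem monotone_mul_indicator_box {c : ℝ} (hc : 0 ≤ c) (x : ι → ℝ) :
    Monotone fun a => c * (box a).indicator 1 x := fun _ _ hab =>
  mul_le_mul_of_nonneg_left (indicator_le_indicator_of_subset (box_mono hab)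
    (fun _ => zero_le_one) x) hc

theorem abs_indicator_box_le_one (a x : ι → ℝ) : |(box a).indicator (1 : (ι → ℝ) → ℝ) x| ≤ 1 := by
  by_cases hx : x ∈ box a <;> simp [hx]

theorem eventually_mem_box_iff [Finite ι] {x a : ι → ℝ} (hx : ∀ j, x j ≠ a j) :
    ∀ᶠ b in 𝓝 a, (x ∈ box b ↔ x ∈ box a) := by
  have hcoord : ∀ j, ∀ᶠ b in 𝓝 a, (x j < b j ↔ x j < a j) := fun j => by
    rcases (hx j).lt_or_gt with h | h
    · filter_upwards [(continuous_apply j).continuousAt.eventually (Ioi_mem_nhds h)] with b hb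
      exact iff_of_true hb h
    · filter_upwards [(continuous_apply j).continuousAt.eventually (Iio_mem_nhds h)] with b hb
      exact iff_of_false (not_lt.2 (le_of_lt hb)) (not_lt.2 h.le)
  filter_upwards [eventually_all.2 hcoord] with b hb
  simp only [box, mem_univ_pi, mem_Ico]
  exact forall_congr' fun j => and_congr_right fun _ => hb j

theorem continuousAt_indicator_box [Finite ι] {x a : ι → ℝ} (hx : ∀ j, x j ≠ a j) :
    ContinuousAt (fun b => (box b).indicator (1 : (ι → ℝ) → ℝ) x) a :=
  (continuousAt_const (y := (box a).indicator 1 x)).congr <| by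
    filter_upwards [eventually_mem_box_iff hx] with b hb
    show (box a).indicator 1 x = (box b).indicator 1 x
    by_cases hxa : x ∈ box a <;> simp [hxa, hb]

variable {Ω : Type*} [MeasurableSpace Ω] {μ : Measure Ω} {X : Ω → ι → ℝ} {w : Ω → ℝ}

theorem integrable_mul_indicator_box [Countable ι] (hX : AEMeasurable X μ) (hw : Integrable w μ)
    (a : ι → ℝ) : Integrable (fun ω => w ω * (box a).indicator 1 (X ω)) μ := by
  refine (hw.bdd_mul (c := 1) ?_ ?_).congr (Eventually.of_forall fun ω => mul_comm _ _)
  · exact ((measurable_indicator_box a).comp_aemeasurable hX).aestronglyMeasurable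
  · exact Eventually.of_forall fun ω => by simpa using abs_indicator_box_le_one a (X ω)

theorem continuous_integral_mul_indicator_box [Fintype ι] (hX : AEMeasurable X μ)
    (hdens : μ.map X ≪ volume) (hw : Integrable w μ) :
    Continuous fun a => ∫ ω, w ω * (box a).indicator 1 (X ω) ∂μ := by
  refine continuous_iff_continuousAt.2 fun a => continuousAt_of_dominated
    (Eventually.of_forall fun b => (integrable_mul_indicator_box hX hw b).aestronglyMeasurable)
    (Eventually.of_forall fun b => Eventually.of_forall fun ω => ?_) hw.norm ?_
  · rw [norm_mul]
    exact mul_le_of_le_one_right (norm_nonneg _) (abs_indicator_box_le_one b (X ω))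
  · have hnull : ∀ᵐ x ∂(volume : Measure (ι → ℝ)), ∀ j, x j ≠ a j :=
      ae_all_iff.2 fun j => Measure.ae_eval_ne (fun _ : ι => (volume : Measure ℝ)) j (a j)
    filter_upwards [ae_of_ae_map hX (hdens.ae_le hnull)] with ω hω
    exact continuousAt_const.mul (continuousAt_indicator_box hω)

end Box

noncomputable def empiricalMean {E : Type*} (f : E → ℝ) (y : ℕ → E) (M : ℕ) : ℝ :=
  (M : ℝ)⁻¹ * ∑ m ∈ Finset.range M, f (y m)

section EmpiricalMean

variable {E : Type*} {f g : E → ℝ} {y : ℕ → E}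

theorem empiricalMean_mono (h : ∀ x, f x ≤ g x) (M : ℕ) :
    empiricalMean f y M ≤ empiricalMean g y M :=
  mul_le_mul_of_nonneg_left (Finset.sum_le_sum fun m _ => h (y m)) (by positivity)

theorem empiricalMean_sub (M : ℕ) :
    empiricalMean (fun x => f x - g x) y M = empiricalMean f y M - empiricalMean g y M := by
  simp only [empiricalMean, Finset.sum_sub_distrib, mul_sub]

theorem tendsto_empiricalMean_one (y : ℕ → E) : Tendsto (empiricalMean 1 y) atTop (𝓝 1) :=
  tendsto_const_nhds.congr' <| by
    filter_upwards [eventually_ne_atTop 0] with M hM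
    simp [empiricalMean, hM]

variable {Ω : Type*} [MeasurableSpace Ω] {μ : Measure Ω} [MeasurableSpace E]
  {W : ℕ → Ω → E} {Y : Ω → E}

theorem ae_tendsto_empiricalMean (hindep : Pairwise fun m n => IndepFun (W m) (W n) μ)
    (hident : ∀ m, IdentDistrib (W m) Y μ μ) (hf : Measurable f)
    (hfi : Integrable (fun ω => f (Y ω)) μ) :
    ∀ᵐ ω ∂μ, Tendsto (empiricalMean f (W · ω)) atTop (𝓝 (∫ ω, f (Y ω) ∂μ)) := by
  have hident_f : ∀ m, IdentDistrib (f ∘ W m) (f ∘ Y) μ μ := fun m => (hident m).comp hf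
  have hslln := strong_law_ae (fun m => f ∘ W m) ((hident_f 0).integrable_iff.2 hfi)
    (fun m n hmn => (hindep hmn).comp hf hf) fun m => (hident_f m).trans (hident_f 0).symm
  rw [(hident_f 0).integral_eq] at hslln
  exact hslln

end EmpiricalMean

section UniformBoxAverage

variable {ι Ω E : Type*} [Fintype ι] [MeasurableSpace Ω] [MeasurableSpace E] {μ : Measure Ω}
  {X : Ω → ι → ℝ} {Z : Ω → E} {W : ℕ → Ω → (ι → ℝ) × E} {ξ : (ι → ℝ) × E → ℝ}
  {K : Set (ι → ℝ)}

theorem ae_tendstoUniformlyOn_empiricalMean_mul_indicator_box_of_nonneg (hX : AEMeasurable X μ)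
    (hdens : μ.map X ≪ volume) (hindep : Pairwise fun m n => IndepFun (W m) (W n) μ)
    (hident : ∀ m, IdentDistrib (W m) (fun ω => (X ω, Z ω)) μ μ) (hξ : Measurable ξ)
    (hξ0 : ∀ y, 0 ≤ ξ y) (hξi : Integrable (fun ω => ξ (X ω, Z ω)) μ) (hK : IsCompact K) :
    ∀ᵐ ω ∂μ, TendstoUniformlyOn
      (fun M a => empiricalMean (fun y => ξ y * (box a).indicator 1 y.1) (W · ω) M)
      (fun a => ∫ ω', ξ (X ω', Z ω') * (box a).indicator 1 (X ω') ∂μ) atTop K := by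
  have hcont := continuous_integral_mul_indicator_box hX hdens hξi
  have hmono : Monotone fun a => ∫ ω', ξ (X ω', Z ω') * (box a).indicator 1 (X ω') ∂μ :=
    fun a b hab => integral_mono (integrable_mul_indicator_box hX hξi a)
      (integrable_mul_indicator_box hX hξi b)
      fun ω' => monotone_mul_indicator_box (hξ0 _) (X ω') hab
  have hrat := ae_all_iff.2 fun q : ι → ℚ => ae_tendsto_empiricalMean hindep hident
    (f := fun y => ξ y * (box fun j => (q j : ℝ)).indicator 1 y.1)
    (hξ.mul ((measurable_indicator_box _).comp measurable_fst))
    (integrable_mul_indicator_box hX hξi _)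
  filter_upwards [hrat] with ω hω
  exact tendstoUniformlyOn_of_monotone_of_tendsto_rat hK
    (fun M a b hab => empiricalMean_mono (fun y => monotone_mul_indicator_box (hξ0 y) y.1 hab) M)
    hmono (fun a _ => hcont.continuousAt) hω

theorem ae_tendstoUniformlyOn_empiricalMean_mul_indicator_box (hX : AEMeasurable X μ)
    (hdens : μ.map X ≪ volume) (hindep : Pairwise fun m n => IndepFun (W m) (W n) μ)
    (hident : ∀ m, IdentDistrib (W m) (fun ω => (X ω, Z ω)) μ μ) (hξ : Measurable ξ)
    (hξi : Integrable (fun ω => ξ (X ω, Z ω)) μ) (hK : IsCompact K) :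
    ∀ᵐ ω ∂μ, TendstoUniformlyOn
      (fun M a => empiricalMean (fun y => ξ y * (box a).indicator 1 y.1) (W · ω) M)
      (fun a => ∫ ω', ξ (X ω', Z ω') * (box a).indicator 1 (X ω') ∂μ) atTop K := by
  have hpos := ae_tendstoUniformlyOn_empiricalMean_mul_indicator_box_of_nonneg hX hdens hindep
    hident (ξ := fun y => max (ξ y) 0) (hξ.max measurable_const) (fun y => le_max_right _ _)
    hξi.pos_part hK
  have hneg := ae_tendstoUniformlyOn_empiricalMean_mul_indicator_box_of_nonneg hX hdens hindep
    hident (ξ := fun y => max (-ξ y) 0) (hξ.neg.max measurable_const) (fun y => le_max_right _ _)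
    hξi.neg_part hK
  filter_upwards [hpos, hneg] with ω hωpos hωneg
  refine ((hωpos.sub hωneg).congr (Eventually.of_forall fun M a _ => ?_)).congr_right
    fun a _ => ?_
  · simp only [Pi.sub_apply, ← empiricalMean_sub, ← sub_mul, max_zero_sub_max_neg_zero_eq_self]
  · simp only [Pi.sub_apply]
    rw [← integral_sub (integrable_mul_indicator_box hX hξi.pos_part a)
      (integrable_mul_indicator_box hX hξi.neg_part a)]
    simp only [← sub_mul, max_zero_sub_max_neg_zero_eq_self]

end UniformBoxAverage

section TreeLoss

variable {d : ℕ}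

theorem treeLoss_eq (x : Fin d → ℝ) (z : ℝ) (p : ℝ × ℝ × (Fin d → ℝ)) :
    treeLoss x z p = z ^ 2 - 2 * p.2.1 * z + p.2.1 ^ 2
      - 2 * (p.1 - p.2.1) * (z * (box p.2.2).indicator 1 x)
      + (p.1 ^ 2 - p.2.1 ^ 2) * (box p.2.2).indicator 1 x := by
  unfold box
  by_cases hx : x ∈ univ.pi fun j => Ico (0 : ℝ) (p.2.2 j) <;> simp [treeLoss, hx] <;> ring

theorem empiricalMean_treeLoss (y : ℕ → (Fin d → ℝ) × ℝ) (p : ℝ × ℝ × (Fin d → ℝ)) (M : ℕ) :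
    empiricalMean (fun y => treeLoss y.1 y.2 p) y M =
      empiricalMean (fun y => y.2 ^ 2) y M - 2 * p.2.1 * empiricalMean (fun y => y.2) y M
      + p.2.1 ^ 2 * empiricalMean 1 y M
      - 2 * (p.1 - p.2.1) * empiricalMean (fun y => y.2 * (box p.2.2).indicator 1 y.1) y M
      + (p.1 ^ 2 - p.2.1 ^ 2) * empiricalMean (fun y => (box p.2.2).indicator 1 y.1) y M := by
  simp only [empiricalMean, treeLoss_eq, Finset.sum_add_distrib, Finset.sum_sub_distrib,
    ← Finset.mul_sum, Pi.one_apply, Finset.sum_const, Finset.card_range, nsmul_eq_mul]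
  ring

theorem tendstoUniformlyOn_empiricalMean_treeLoss {y : ℕ → (Fin d → ℝ) × ℝ}
    {s₂ s₁ C : ℝ} {g₁ g₀ : (Fin d → ℝ) → ℝ} {K : Set (Fin d → ℝ)}
    (h₂ : Tendsto (empiricalMean (fun y => y.2 ^ 2) y) atTop (𝓝 s₂))
    (h₁ : Tendsto (empiricalMean (fun y => y.2) y) atTop (𝓝 s₁))
    (hg₁ : TendstoUniformlyOn
      (fun M a => empiricalMean (fun y => y.2 * (box a).indicator 1 y.1) y M) g₁ atTop K)
    (hg₀ : TendstoUniformlyOn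
      (fun M a => empiricalMean (fun y => (box a).indicator 1 y.1) y M) g₀ atTop K) :
    TendstoUniformlyOn (fun M p => empiricalMean (fun y => treeLoss y.1 y.2 p) y M)
      (fun p => s₂ - 2 * p.2.1 * s₁ + p.2.1 ^ 2 - 2 * (p.1 - p.2.1) * g₁ p.2.2
        + (p.1 ^ 2 - p.2.1 ^ 2) * g₀ p.2.2)
      atTop {p | |p.1| ≤ C ∧ |p.2.1| ≤ C ∧ p.2.2 ∈ K} := by
  set S := {p : ℝ × ℝ × (Fin d → ℝ) | |p.1| ≤ C ∧ |p.2.1| ≤ C ∧ p.2.2 ∈ K}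
  have hS : ∀ p ∈ S, |-2 * p.2.1| ≤ 2 * C ∧ |p.2.1 ^ 2| ≤ C ^ 2 ∧
      |-2 * (p.1 - p.2.1)| ≤ 4 * C ∧ |p.1 ^ 2 - p.2.1 ^ 2| ≤ 2 * C ^ 2 := by
    rintro ⟨α, β, a⟩ ⟨hα, hβ, -⟩
    have hα2 : α ^ 2 ≤ C ^ 2 := sq_le_sq' (abs_le.1 hα).1 (abs_le.1 hα).2
    have hβ2 : β ^ 2 ≤ C ^ 2 := sq_le_sq' (abs_le.1 hβ).1 (abs_le.1 hβ).2
    simp only [abs_le] at hα hβ ⊢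
    refine ⟨⟨?_, ?_⟩, ⟨?_, ?_⟩, ⟨?_, ?_⟩, ⟨?_, ?_⟩⟩ <;> nlinarith [sq_nonneg α, sq_nonneg β]
  have hbox {G : ℕ → (Fin d → ℝ) → ℝ} {g : (Fin d → ℝ) → ℝ}
      (h : TendstoUniformlyOn G g atTop K) :
      TendstoUniformlyOn (fun M p => G M p.2.2) (fun p => g p.2.2) atTop S :=
    (h.comp _).mono fun p hp => hp.2.2
  have h := (((((h₂.tendstoUniformlyOn_const S).add
    ((h₁.tendstoUniformlyOn_const S).mul_left_of_abs_le fun p hp => (hS p hp).1)).add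
    (((tendsto_empiricalMean_one y).tendstoUniformlyOn_const S).mul_left_of_abs_le
      fun p hp => (hS p hp).2.1)).add
    ((hbox hg₁).mul_left_of_abs_le fun p hp => (hS p hp).2.2.1)).add
    ((hbox hg₀).mul_left_of_abs_le fun p hp => (hS p hp).2.2.2))
  refine (h.congr (Eventually.of_forall fun M p _ => ?_)).congr_right fun p _ => ?_
  · simp only [Pi.add_apply, empiricalMean_treeLoss]
    ring
  · simp only [Pi.add_apply]
    ring

theorem integral_treeLoss {Ω : Type*} [MeasurableSpace Ω] {μ : Measure Ω} [IsProbabilityMeasure μ]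
    {X : Ω → Fin d → ℝ} {Z : Ω → ℝ} (hX : AEMeasurable X μ) (hZ : MemLp Z 2 μ)
    (p : ℝ × ℝ × (Fin d → ℝ)) :
    ∫ ω, treeLoss (X ω) (Z ω) p ∂μ =
      ∫ ω, Z ω ^ 2 ∂μ - 2 * p.2.1 * ∫ ω, Z ω ∂μ + p.2.1 ^ 2
      - 2 * (p.1 - p.2.1) * ∫ ω, Z ω * (box p.2.2).indicator 1 (X ω) ∂μ
      + (p.1 ^ 2 - p.2.1 ^ 2) * ∫ ω, (box p.2.2).indicator 1 (X ω) ∂μ := by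
  have hZ₂ : Integrable (fun ω => Z ω ^ 2) μ := hZ.integrable_sq
  have hZ₁ : Integrable Z μ := hZ.integrable one_le_two
  have hZB := integrable_mul_indicator_box hX hZ₁ p.2.2
  have hB : Integrable (fun ω => (box p.2.2).indicator (1 : (Fin d → ℝ) → ℝ) (X ω)) μ := by
    simpa only [one_mul] using integrable_mul_indicator_box hX (integrable_const (1 : ℝ)) p.2.2
  simp only [treeLoss_eq]
  rw [integral_add, integral_sub, integral_add, integral_sub, integral_const_mul,
    integral_const_mul, integral_const_mul, integral_const, probReal_univ, one_smul]
  all_goals fun_prop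

end TreeLoss

theorem tendsto_sup_abs_empirical_tree_loss_sub_general {Ω : Type*} [MeasurableSpace Ω]
    (μ : Measure Ω) [IsProbabilityMeasure μ]
    {d : ℕ} (X : Ω → (Fin d → ℝ)) (hX : Measurable X)
    (hdens : Measure.map X μ ≪ (volume : Measure (Fin d → ℝ)))
    (Z : Ω → ℝ) (hZ : MemLp Z 2 μ)
    (W : ℕ → Ω → (Fin d → ℝ) × ℝ) (hWmeas : ∀ m, Measurable (W m))
    (hWindep : iIndepFun W μ)
    (hWident : ∀ m, Measure.map (W m) μ = Measure.map (fun ω => (X ω, Z ω)) μ) :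
    ∀ᵐ ω ∂μ, ∀ C > (0 : ℝ),
      Tendsto (fun M : ℕ =>
          ⨆ p : {q : ℝ × ℝ × (Fin d → ℝ) //
              |q.1| ≤ C ∧ |q.2.1| ≤ C ∧ q.2.2 ∈ Set.Icc (0 : Fin d → ℝ) 1},
            |(M : ℝ)⁻¹ * (∑ m ∈ Finset.range M, treeLoss (W m ω).1 (W m ω).2 ↑p)
              - ∫ ω', treeLoss (X ω') (Z ω') ↑p ∂μ|)
        atTop (nhds 0) := by
  have hindep : Pairwise fun m n => IndepFun (W m) (W n) μ := fun m n hmn => hWindep.indepFun hmn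
  have hident : ∀ m, IdentDistrib (W m) (fun ω => (X ω, Z ω)) μ μ := fun m =>
    ⟨(hWmeas m).aemeasurable, hX.aemeasurable.prodMk hZ.aestronglyMeasurable.aemeasurable,
      hWident m⟩
  have hZ₁ : Integrable Z μ := hZ.integrable one_le_two
  have h₂ := ae_tendsto_empiricalMean hindep hident (f := fun y => y.2 ^ 2) (by fun_prop)
    hZ.integrable_sq
  have h₁ := ae_tendsto_empiricalMean hindep hident (f := fun y => y.2) measurable_snd hZ₁
  have hg₁ := ae_tendstoUniformlyOn_empiricalMean_mul_indicator_box hX.aemeasurable hdens hindep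
    hident (ξ := fun y => y.2) measurable_snd hZ₁ (isCompact_Icc (a := 0) (b := 1))
  have hg₀ := ae_tendstoUniformlyOn_empiricalMean_mul_indicator_box hX.aemeasurable hdens hindep
    hident (ξ := 1) measurable_const (integrable_const 1) (isCompact_Icc (a := 0) (b := 1))
  simp only [Pi.one_apply, one_mul] at hg₀
  filter_upwards [h₂, h₁, hg₁, hg₀] with ω hω₂ hω₁ hωg₁ hωg₀ C _
  have hunif : TendstoUniformlyOn
      (fun M p => empiricalMean (fun y => treeLoss y.1 y.2 p) (W · ω) M)
      (fun p => ∫ ω', treeLoss (X ω') (Z ω') p ∂μ) atTop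
      {q : ℝ × ℝ × (Fin d → ℝ) | |q.1| ≤ C ∧ |q.2.1| ≤ C ∧ q.2.2 ∈ Icc 0 1} :=
    (tendstoUniformlyOn_empiricalMean_treeLoss hω₂ hω₁ hωg₁ hωg₀).congr_right
      fun p _ => (integral_treeLoss hX.aemeasurable hZ p).symm
  exact hunif.tendsto_iSup_abs_sub

/-- Let `X` be valued in `[0,1]^d` with a density w.r.t. Lebesgue measure, `Z` square
integrable, and `((X_m, Z_m))` i.i.d. copies of `(X, Z)`.  With
`ν_M(α, β, a) = (1/M) Σ_{m=1}^M (Z_m − α·1{X_m ∈ B_a} − β·1{X_m ∉ B_a})²` and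
`ν(α, β, a) = E[(Z − α·1{X ∈ B_a} − β·1{X ∉ B_a})²]`, almost surely, for every `C > 0`,
`sup_{a ∈ [0,1]^d, |α| ≤ C, |β| ≤ C} |ν_M(α, β, a) − ν(α, β, a)| → 0` as `M → ∞`. -/
theorem tendsto_sup_abs_empirical_tree_loss_sub {Ω : Type*} [MeasurableSpace Ω]
    (μ : Measure Ω) [IsProbabilityMeasure μ]
    {d : ℕ} (X : Ω → (Fin d → ℝ)) (hX : Measurable X)
    (hXval : ∀ ω, X ω ∈ Set.Icc (0 : Fin d → ℝ) 1)
    (hdens : Measure.map X μ ≪ (volume : Measure (Fin d → ℝ)))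
    (Z : Ω → ℝ) (hZ : MemLp Z 2 μ)
    (W : ℕ → Ω → (Fin d → ℝ) × ℝ) (hWmeas : ∀ m, Measurable (W m))
    (hWindep : iIndepFun W μ)
    (hWident : ∀ m, Measure.map (W m) μ = Measure.map (fun ω => (X ω, Z ω)) μ) :
    ∀ᵐ ω ∂μ, ∀ C > (0 : ℝ),
      Tendsto (fun M : ℕ =>
          ⨆ p : {q : ℝ × ℝ × (Fin d → ℝ) //
              |q.1| ≤ C ∧ |q.2.1| ≤ C ∧ q.2.2 ∈ Set.Icc (0 : Fin d → ℝ) 1},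
            |(M : ℝ)⁻¹ * (∑ m ∈ Finset.range M, treeLoss (W m ω).1 (W m ω).2 ↑p)
              - ∫ ω', treeLoss (X ω') (Z ω') ↑p ∂μ|)
        atTop (nhds 0) :=
  tendsto_sup_abs_empirical_tree_loss_sub_general μ X hX hdens Z hZ W hWmeas hWindep hWident
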